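/- Let $p$ be a prime, $F$ a field of characteristic $p$, and $V$ a finite-dimensional $F$-vector space. Let $\tau : V \to V$ be a linear endomorphism such that $\ker((\tau - \mathrm{id})^2) = \ker(\tau - \mathrm{id})$ and such that the cokernel of $\tau - \mathrm{id}$ (i.e. $V / \mathrm{range}(\tau - \mathrm{id})$) has dimension $1$ over $F$. Then for every natural number $r \geq 1$, the cokernel of $\tau^{p^r} - \mathrm{id}$, i.e. $V / \mathrm{range}(\tau^{p^r} - \mathrm{id})$, also has dimension $1$ over $F$. -/

import Mathlib

/-- Linear-algebraic core of Lemma 2.4 (L:prime torus): over a field `F` of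
characteristic `p`, if `ker ((τ - 1)^2) = ker (τ - 1)` and the cokernel of
`τ - 1` is one-dimensional, then the cokernel of `τ^(p^r) - 1` is also
one-dimensional, for every `r ≥ 1`. -/
theorem coker_pow_prime_dim_one
    (p : ℕ) (hp : Nat.Prime p)
    (F : Type*) [Field F] (hchar : CharP F p)
    (V : Type*) [AddCommGroup V] [Module F V] [FiniteDimensional F V]
    (τ : V →ₗ[F] V)
    (hker : LinearMap.ker ((τ - 1) ^ 2) = LinearMap.ker (τ - 1))
    (hcoker : Module.finrank F (V ⧸ LinearMap.range (τ - 1)) = 1) :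
    ∀ r : ℕ, 1 ≤ r →
      Module.finrank F (V ⧸ LinearMap.range (τ ^ (p ^ r) - 1)) = 1 := by
  intro r hr
  -- V is nontrivial
  have hntq : Nontrivial (V ⧸ LinearMap.range (τ - 1)) := by
    rw [← Module.finrank_pos_iff (R := F), hcoker]
    exact one_pos
  have hntV : Nontrivial V :=
    (Submodule.mkQ_surjective (LinearMap.range (τ - 1))).nontrivial
  haveI := hp.one_lt
  haveI : Fact (Nat.Prime p) := ⟨hp⟩
  haveI : CharP (Module.End F V) p :=
    charP_of_injective_algebraMap' (A := Module.End F V) F p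
  set σ : V →ₗ[F] V := τ - 1 with hσ
  -- τ^(p^r) - 1 = σ^(p^r)
  have hpow : τ ^ (p ^ r) - 1 = σ ^ (p ^ r) := by
    rw [hσ, sub_pow_char_pow_of_commute (p := p) (n := r) (Commute.one_right τ), one_pow]
  -- range σ^2 = range σ
  have hk2 : Module.finrank F (LinearMap.ker (σ ^ 2)) = Module.finrank F (LinearMap.ker σ) := by
    rw [hker]
  have hrange2 : LinearMap.range (σ ^ 2) = LinearMap.range σ := by
    apply Submodule.eq_of_le_of_finrank_le
    · rw [pow_two, Module.End.mul_eq_comp, LinearMap.range_comp]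
      exact LinearMap.map_le_range
    · have h1 := LinearMap.finrank_range_add_finrank_ker (σ ^ 2)
      have h2 := LinearMap.finrank_range_add_finrank_ker σ
      omega
  -- range σ^(n+1) = range σ
  have hrangen : ∀ n : ℕ, LinearMap.range (σ ^ (n + 1)) = LinearMap.range σ := by
    intro n
    induction n with
    | zero => rw [pow_one]
    | succ k ih =>
      have : σ ^ (k + 2) = σ ∘ₗ σ ^ (k + 1) := by
        rw [← Module.End.mul_eq_comp, ← pow_succ']
      rw [this, LinearMap.range_comp, ih, ← LinearMap.range_comp,
        ← Module.End.mul_eq_comp, ← pow_two, hrange2]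
  have hn : p ^ r ≠ 0 := pow_ne_zero r hp.pos.ne'
  obtain ⟨m, hm⟩ : ∃ m, p ^ r = m + 1 := ⟨p ^ r - 1, by omega⟩
  rw [hpow, hm, hrangen m]
  exact hcoker
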